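/- arXiv:0904.2636 — 9 statements merged into one kernel-verified Lean document; each statement's English description precedes it below -/
import Mathlib

section
/- Let 𝔤 be a finite-dimensional real Lie algebra and let B denote its Killing form. Let 𝔪 ⊆ 𝔤 be a linear subspace such that the restriction of B to 𝔪 is definite (i.e. B(Y,Y) > 0 for all nonzero Y ∈ 𝔪, or B(Y,Y) < 0 for all nonzero Y ∈ 𝔪). If X ∈ 𝔤 satisfies [X, Y] ∈ 𝔪 for all Y ∈ 𝔪 and B(X, [Y, Z]) = 0 for all Y, Z ∈ 𝔪, then [X, Y] = 0 for all Y ∈ 𝔪. -/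
/-- Let `𝔤` be a finite-dimensional real Lie algebra with Killing form `B`.  Let `𝔪 ⊆ 𝔤` be a
linear subspace on which `B` is definite.  If `X ∈ 𝔤` satisfies `⁅X, Y⁆ ∈ 𝔪` for all `Y ∈ 𝔪`
and `B X ⁅Y, Z⁆ = 0` for all `Y, Z ∈ 𝔪`, then `⁅X, Y⁆ = 0` for all `Y ∈ 𝔪`. -/
theorem stmt_0 (L : Type*) [LieRing L] [LieAlgebra ℝ L] [Module.Finite ℝ L]
    (𝔪 : Submodule ℝ L)
    (hdef : (∀ Y ∈ 𝔪, Y ≠ 0 → 0 < killingForm ℝ L Y Y) ∨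
            (∀ Y ∈ 𝔪, Y ≠ 0 → killingForm ℝ L Y Y < 0))
    (X : L)
    (hX1 : ∀ Y ∈ 𝔪, ⁅X, Y⁆ ∈ 𝔪)
    (hX2 : ∀ Y ∈ 𝔪, ∀ Z ∈ 𝔪, killingForm ℝ L X ⁅Y, Z⁆ = 0) :
    ∀ Y ∈ 𝔪, ⁅X, Y⁆ = 0 := by
  intro Y hY
  by_contra h
  have hmem : ⁅X, Y⁆ ∈ 𝔪 := hX1 Y hY
  have key : killingForm ℝ L ⁅X, Y⁆ ⁅X, Y⁆ = 0 := by
    rw [LieModule.traceForm_apply_lie_apply]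
    exact hX2 Y hY ⁅X, Y⁆ hmem
  rcases hdef with hpos | hneg
  · exact absurd key (ne_of_gt (hpos _ hmem h))
  · exact absurd key (ne_of_lt (hneg _ hmem h))
end

section
/- Let 𝔨 be a finite-dimensional real Lie algebra equipped with a symmetric bilinear form B that is negative definite and invariant, i.e. B([X,Y],Z) = B(X,[Y,Z]) for all X,Y,Z ∈ 𝔨. Suppose 𝔨 = 𝔨₀ ⊕ 𝔨₋ is a direct sum of linear subspaces with [𝔨₀, 𝔨₋] ⊆ 𝔨₋ and [𝔨₋, 𝔨₋] ⊆ 𝔨₀, and suppose the adjoint action of 𝔨₀ on 𝔨₋ is faithful, i.e. if Z ∈ 𝔨₀ satisfies [Z, Y] = 0 for all Y ∈ 𝔨₋, then Z = 0. Then 𝔨₀ equals the linear span of {[Y₁, Y₂] : Y₁, Y₂ ∈ 𝔨₋}. -/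
/-- Let `𝔨` be a finite-dimensional real Lie algebra equipped with a symmetric, negative definite,
invariant bilinear form `B`.  Suppose `𝔨 = 𝔨₀ ⊕ 𝔨₋` is a direct sum of linear subspaces with
`⁅𝔨₀, 𝔨₋⁆ ⊆ 𝔨₋` and `⁅𝔨₋, 𝔨₋⁆ ⊆ 𝔨₀`, and that the adjoint action of `𝔨₀` on `𝔨₋` is faithful.
Then `𝔨₀` equals the linear span of `{⁅Y₁, Y₂⁆ : Y₁, Y₂ ∈ 𝔨₋}`. -/
theorem stmt_1 (K : Type*) [LieRing K] [LieAlgebra ℝ K] [Module.Finite ℝ K]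
    (B : K →ₗ[ℝ] K →ₗ[ℝ] ℝ)
    (hsymm : ∀ X Y : K, B X Y = B Y X)
    (hneg : ∀ X : K, X ≠ 0 → B X X < 0)
    (hinv : ∀ X Y Z : K, B ⁅X, Y⁆ Z = B X ⁅Y, Z⁆)
    (k0 km : Submodule ℝ K)
    (hsum : k0 ⊔ km = ⊤)
    (hdisj : k0 ⊓ km = ⊥)
    (h0m : ∀ X ∈ k0, ∀ Y ∈ km, ⁅X, Y⁆ ∈ km)
    (hmm : ∀ X ∈ km, ∀ Y ∈ km, ⁅X, Y⁆ ∈ k0)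
    (hfaith : ∀ Z ∈ k0, (∀ Y ∈ km, ⁅Z, Y⁆ = 0) → Z = 0) :
    k0 = Submodule.span ℝ {Z : K | ∃ Y₁ ∈ km, ∃ Y₂ ∈ km, ⁅Y₁, Y₂⁆ = Z} := by
  set S := Submodule.span ℝ {Z : K | ∃ Y₁ ∈ km, ∃ Y₂ ∈ km, ⁅Y₁, Y₂⁆ = Z} with hS
  have hzero : ∀ X : K, B X X = 0 → X = 0 := by
    intro X hX
    by_contra h
    exact absurd hX (ne_of_lt (hneg X h))
  have hSle : S ≤ k0 := by
    rw [hS, Submodule.span_le]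
    rintro Z ⟨Y₁, hY₁, Y₂, hY₂, rfl⟩
    exact hmm Y₁ hY₁ Y₂ hY₂
  have hrefl : LinearMap.IsRefl B := fun x y h => by rw [hsymm]; exact h
  have hnd : (LinearMap.BilinForm.restrict B S).Nondegenerate := by
    refine ⟨?_, ?_⟩
    all_goals
      rintro ⟨x, hx⟩ h
      have hxx : B x x = 0 := h ⟨x, hx⟩
      exact Subtype.ext (hzero x hxx)
  have hcompl : IsCompl S (LinearMap.BilinForm.orthogonal B S) :=
    LinearMap.BilinForm.isCompl_orthogonal_of_restrict_nondegenerate hrefl hnd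
  apply le_antisymm _ hSle
  intro Z hZ
  obtain ⟨s, hs, t, ht, rfl⟩ := Submodule.mem_sup.1 (hcompl.sup_eq_top ▸ Submodule.mem_top :
    Z ∈ S ⊔ LinearMap.BilinForm.orthogonal B S)
  have ht0 : t ∈ k0 := by
    rw [show t = s + t - s from (add_sub_cancel_left s t).symm]
    exact Submodule.sub_mem k0 hZ (hSle hs)
  have htz : t = 0 := by
    apply hfaith t ht0
    intro Y hY
    apply hzero
    have h1 : B ⁅t, Y⁆ ⁅t, Y⁆ = B t ⁅Y, ⁅t, Y⁆⁆ := hinv t Y ⁅t, Y⁆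
    have h2 : ⁅Y, ⁅t, Y⁆⁆ ∈ S := Submodule.subset_span
      ⟨Y, hY, ⁅t, Y⁆, h0m t ht0 Y hY, rfl⟩
    have h3 : B ⁅Y, ⁅t, Y⁆⁆ t = 0 :=
      (LinearMap.BilinForm.mem_orthogonal_iff.1 ht) _ h2
    rw [h1, hsymm, h3]
  rw [htz, add_zero]
  exact hs
end

section
/- Let V be a finite-dimensional real inner product space and let 𝔰𝔬(V) denote the space of skew-adjoint linear endomorphisms of V, a Lie algebra under the commutator bracket [A,B] = A∘B − B∘A. Let 𝔤 ⊆ 𝔰𝔬(V) be a Lie subalgebra and let A ∈ 𝔰𝔬(V) satisfy [A, B] ∈ 𝔤 for all B ∈ 𝔤. If A' ∈ 𝔤 satisfies trace((A − A')∘B) = 0 for all B ∈ 𝔤, then [A − A', B] = 0 for all B ∈ 𝔤; in other words, every such outer derivation ad(A) of 𝔤 restricts on 𝔤 to the inner derivation ad(A'), where A' is the orthogonal projection of A onto 𝔤 with respect to the inner product ⟨A,B⟩ = −trace(A∘B). -/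
open scoped RealInnerProductSpace

lemma trace_ob {V : Type*} [NormedAddCommGroup V] [InnerProductSpace ℝ V]
    [FiniteDimensional ℝ V] (f : V →ₗ[ℝ] V) :
    LinearMap.trace ℝ V f = ∑ i, ⟪(stdOrthonormalBasis ℝ V) i, f ((stdOrthonormalBasis ℝ V) i)⟫ := by
  set b := stdOrthonormalBasis ℝ V
  rw [LinearMap.trace_eq_matrix_trace ℝ b.toBasis, Matrix.trace]
  congr 1
  ext i
  rw [Matrix.diag_apply, LinearMap.toMatrix_apply, OrthonormalBasis.coe_toBasis,
    OrthonormalBasis.coe_toBasis_repr_apply, b.repr_apply_apply]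

/-- Let `V` be a finite-dimensional real inner product space, `𝔤` a Lie subalgebra of the
skew-adjoint endomorphisms of `V`, and `A` a skew-adjoint endomorphism with `⁅A, B⁆ ∈ 𝔤`
for all `B ∈ 𝔤`.  If `A' ∈ 𝔤` satisfies `trace ((A - A') ∘ B) = 0` for all `B ∈ 𝔤`, then
`⁅A - A', B⁆ = 0` for all `B ∈ 𝔤`. -/
theorem stmt_2 (V : Type*) [NormedAddCommGroup V] [InnerProductSpace ℝ V]
    [FiniteDimensional ℝ V]
    (G : Submodule ℝ (V →ₗ[ℝ] V))
    (hGskew : ∀ B ∈ G, ∀ x y : V, ⟪B x, y⟫ = -⟪x, B y⟫)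
    (hGlie : ∀ B ∈ G, ∀ C ∈ G, B ∘ₗ C - C ∘ₗ B ∈ G)
    (A : V →ₗ[ℝ] V)
    (hAskew : ∀ x y : V, ⟪A x, y⟫ = -⟪x, A y⟫)
    (hAout : ∀ B ∈ G, A ∘ₗ B - B ∘ₗ A ∈ G)
    (A' : V →ₗ[ℝ] V) (hA' : A' ∈ G)
    (hperp : ∀ B ∈ G, LinearMap.trace ℝ V ((A - A') ∘ₗ B) = 0) :
    ∀ B ∈ G, (A - A') ∘ₗ B - B ∘ₗ (A - A') = 0 := by
  intro B hB
  set D := A - A' with hD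
  -- D is skew-adjoint
  have hDskew : ∀ x y : V, ⟪D x, y⟫ = -⟪x, D y⟫ := by
    intro x y
    simp only [hD, LinearMap.sub_apply, inner_sub_left, inner_sub_right,
      hAskew x y, hGskew A' hA' x y]
    ring
  set X := D ∘ₗ B - B ∘ₗ D with hX
  -- X ∈ G: X = (A∘B - B∘A) - (A'∘B - B∘A')
  have hXG : X ∈ G := by
    have h1 := hAout B hB
    have h2 := hGlie A' hA' B hB
    have : X = (A ∘ₗ B - B ∘ₗ A) - (A' ∘ₗ B - B ∘ₗ A') := by
      simp only [hX, hD]; ext v; simp [LinearMap.sub_apply]; abel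
    rw [this]
    exact G.sub_mem h1 h2
  -- X skew-adjoint (composition/commutator of skews)
  have hBskew := hGskew B hB
  have hXskew : ∀ x y : V, ⟪X x, y⟫ = -⟪x, X y⟫ := hGskew X hXG
  -- trace (X ∘ X) = 0 via ad-invariance
  have key : LinearMap.trace ℝ V (X ∘ₗ X) = 0 := by
    have h1 : X ∘ₗ X = D ∘ₗ (B ∘ₗ X) - (B ∘ₗ D) ∘ₗ X := by
      rw [hX]; ext v; simp [LinearMap.sub_apply]
    have h2 : LinearMap.trace ℝ V ((B ∘ₗ D) ∘ₗ X) = LinearMap.trace ℝ V (D ∘ₗ (X ∘ₗ B)) := by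
      rw [LinearMap.comp_assoc, LinearMap.trace_comp_comm' _ B, LinearMap.comp_assoc]
    have h3 : X ∘ₗ X = D ∘ₗ (B ∘ₗ X) - (B ∘ₗ D) ∘ₗ X := h1
    rw [h3, map_sub, h2, ← map_sub, ← LinearMap.comp_sub]
    have hmem : B ∘ₗ X - X ∘ₗ B ∈ G := hGlie B hB X hXG
    exact hperp _ hmem
  -- trace (X ∘ X) = -∑ ‖X e i‖²
  have htr : LinearMap.trace ℝ V (X ∘ₗ X) = -∑ i, ‖X ((stdOrthonormalBasis ℝ V) i)‖ ^ 2 := by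
    rw [trace_ob]
    rw [← Finset.sum_neg_distrib]
    congr 1; ext i
    rw [LinearMap.comp_apply, ← neg_neg ⟪_, X (X _)⟫, ← hXskew]
    rw [real_inner_self_eq_norm_sq]
  rw [htr] at key
  have hsum : ∑ i, ‖X ((stdOrthonormalBasis ℝ V) i)‖ ^ 2 = 0 := by linarith
  have hzero : ∀ i, X ((stdOrthonormalBasis ℝ V) i) = 0 := by
    intro i
    have := (Finset.sum_eq_zero_iff_of_nonneg (fun i _ => sq_nonneg _)).1 hsum i (Finset.mem_univ i)
    have : ‖X ((stdOrthonormalBasis ℝ V) i)‖ = 0 := by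
      nlinarith [norm_nonneg (X ((stdOrthonormalBasis ℝ V) i))]
    simpa using this
  exact (stdOrthonormalBasis ℝ V).toBasis.ext fun i => by
    simpa using hzero i
end

section
/- Let W be a nonzero finite-dimensional real inner product space and let S be a set of skew-adjoint linear endomorphisms of W that acts irreducibly on W. If A is a nonzero skew-adjoint linear endomorphism of W that commutes with every element of S, then there exists a real number κ > 0 such that A ∘ A = −κ · id_W. -/
open scoped RealInnerProductSpace

/-- Let `W` be a nonzero finite-dimensional real inner product space and `S` a set of skew-adjoint
endomorphisms of `W` acting irreducibly on `W`.  If `A` is a nonzero skew-adjoint endomorphism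
commuting with every element of `S`, then `A ∘ A = -κ • id` for some real `κ > 0`. -/
theorem stmt_3 (W : Type*) [NormedAddCommGroup W] [InnerProductSpace ℝ W]
    [FiniteDimensional ℝ W] [Nontrivial W]
    (S : Set (W →ₗ[ℝ] W))
    (hSskew : ∀ f ∈ S, ∀ x y : W, ⟪f x, y⟫ = -⟪x, f y⟫)
    (hirr : ∀ U : Submodule ℝ W, (∀ f ∈ S, ∀ x ∈ U, f x ∈ U) → U = ⊥ ∨ U = ⊤)
    (A : W →ₗ[ℝ] W) (hA : A ≠ 0)
    (hAskew : ∀ x y : W, ⟪A x, y⟫ = -⟪x, A y⟫)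
    (hcomm : ∀ f ∈ S, A ∘ₗ f = f ∘ₗ A) :
    ∃ κ : ℝ, 0 < κ ∧ A ∘ₗ A = (-κ) • (LinearMap.id : W →ₗ[ℝ] W) := by

  classical
  set B : W →ₗ[ℝ] W := A ∘ₗ A with hBdef
  have hBsym : B.IsSymmetric := by
    intro x y
    simp only [hBdef, LinearMap.comp_apply]
    rw [hAskew, hAskew]
    ring_nf
  -- B has a real eigenvalue μ
  obtain ⟨μ, hμ⟩ : ∃ μ : ℝ, Module.End.HasEigenvalue B μ :=
    ⟨_, hBsym.hasEigenvalue_iSup_of_finiteDimensional⟩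
  -- the eigenspace is invariant under S
  have hinv : ∀ f ∈ S, ∀ x ∈ Module.End.eigenspace B μ, f x ∈ Module.End.eigenspace B μ := by
    intro f hf x hx
    have hBf : B ∘ₗ f = f ∘ₗ B := by
      have h := hcomm f hf
      simp only [hBdef]
      calc (A ∘ₗ A) ∘ₗ f = A ∘ₗ (A ∘ₗ f) := by rw [LinearMap.comp_assoc]
        _ = A ∘ₗ (f ∘ₗ A) := by rw [h]
        _ = (A ∘ₗ f) ∘ₗ A := by rw [LinearMap.comp_assoc]
        _ = (f ∘ₗ A) ∘ₗ A := by rw [h]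
        _ = f ∘ₗ (A ∘ₗ A) := by rw [LinearMap.comp_assoc]
    rw [Module.End.mem_eigenspace_iff] at hx ⊢
    have : B (f x) = f (B x) := by
      have := congrArg (fun g => g x) hBf
      simpa using this
    rw [this, hx, map_smul]
  have hne : Module.End.eigenspace B μ ≠ ⊥ := hμ
  have htop : Module.End.eigenspace B μ = ⊤ :=
    (hirr _ hinv).resolve_left hne
  -- hence B = μ • id
  have hB : ∀ x : W, B x = μ • x := by
    intro x
    have : x ∈ Module.End.eigenspace B μ := htop ▸ Submodule.mem_top
    exact Module.End.mem_eigenspace_iff.mp this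
  -- μ < 0
  obtain ⟨x, hx⟩ : ∃ x : W, A x ≠ 0 := by
    by_contra h
    push_neg at h
    exact hA (LinearMap.ext fun x => h x)
  have hxne : x ≠ 0 := fun h => hx (h ▸ map_zero A)
  have key : μ * ‖x‖ ^ 2 = -‖A x‖ ^ 2 := by
    have h1 : ⟪B x, x⟫ = -⟪A x, A x⟫ := by
      simp only [hBdef, LinearMap.comp_apply]
      rw [hAskew]
    rw [hB x] at h1
    rw [real_inner_smul_left, real_inner_self_eq_norm_sq, real_inner_self_eq_norm_sq] at h1
    linarith
  have hμneg : μ < 0 := by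
    have h1 : (0:ℝ) < ‖x‖ ^ 2 := pow_pos (norm_pos_iff.mpr hxne) 2
    have h2 : (0:ℝ) < ‖A x‖ ^ 2 := pow_pos (norm_pos_iff.mpr hx) 2
    nlinarith
  refine ⟨-μ, by linarith, ?_⟩
  ext y
  simp [hB y, neg_neg]
end

section
/- Let 𝔥 be a real Lie algebra, W a nonzero finite-dimensional real inner product space, and ρ : 𝔥 → End(W) a Lie algebra homomorphism such that ρ(h) is skew-adjoint for every h ∈ 𝔥 and such that {ρ(h) : h ∈ 𝔥} acts irreducibly on W. If the real dimension of Hom_𝔥(W,W) := {λ ∈ End(W) : λ∘ρ(h) = ρ(h)∘λ for all h ∈ 𝔥} is at least 2, then there exists a skew-adjoint linear endomorphism J of W with J ∘ J = −id_W and J∘ρ(h) = ρ(h)∘J for all h ∈ 𝔥 (so that J equips W with the structure of a complex Hermitian vector space on which 𝔥 acts by complex-linear skew-Hermitian endomorphisms). -/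
open scoped RealInnerProductSpace

attribute [local instance 100] LieRing.ofAssociativeRing

/-- The space `Hom_𝔥(W, U)` of `𝔥`-equivariant linear maps between two spaces carrying
families of endomorphisms `ρW : 𝔥 → End(W)` and `ρU : 𝔥 → End(U)`. -/
def homH {H : Type*} {W U : Type*} [AddCommGroup W] [Module ℝ W]
    [AddCommGroup U] [Module ℝ U]
    (ρW : H → (W →ₗ[ℝ] W)) (ρU : H → (U →ₗ[ℝ] U)) : Submodule ℝ (W →ₗ[ℝ] U) where
  carrier := {l | ∀ h : H, l ∘ₗ ρW h = ρU h ∘ₗ l}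
  add_mem' := by
    intro a b ha hb h
    rw [LinearMap.add_comp, LinearMap.comp_add, ha h, hb h]
  zero_mem' := by
    intro h
    rw [LinearMap.zero_comp, LinearMap.comp_zero]
  smul_mem' := by
    intro c a ha h
    rw [LinearMap.smul_comp, LinearMap.comp_smul, ha h]

private theorem schur_aux6 {H : Type*} {W : Type*} [NormedAddCommGroup W]
    [InnerProductSpace ℝ W] [FiniteDimensional ℝ W] [Nontrivial W]
    (ρ : H → (W →ₗ[ℝ] W))
    (hirr : ∀ U : Submodule ℝ W, (∀ (h : H), ∀ x ∈ U, ρ h x ∈ U) → U = ⊥ ∨ U = ⊤)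
    (S : W →ₗ[ℝ] W) (hS : S.IsSymmetric)
    (hcomm : ∀ h, S ∘ₗ ρ h = ρ h ∘ₗ S) :
    ∃ c : ℝ, S = c • LinearMap.id := by
  have htop : (⨆ μ, Module.End.eigenspace S μ) = ⊤ := by
    have := hS.orthogonalComplement_iSup_eigenspaces_eq_bot
    simpa [Submodule.orthogonal_eq_bot_iff] using this
  have hne : ∃ μ, Module.End.eigenspace S μ ≠ ⊥ := by
    by_contra hc
    push_neg at hc
    simp only [hc, iSup_bot] at htop
    exact (bot_ne_top : (⊥ : Submodule ℝ W) ≠ ⊤) htop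
  obtain ⟨μ, hμ⟩ := hne
  have hinv : ∀ (h : H), ∀ x ∈ Module.End.eigenspace S μ, ρ h x ∈ Module.End.eigenspace S μ := by
    intro h x hx
    rw [Module.End.mem_eigenspace_iff] at hx ⊢
    have := congrArg (fun f => f x) (hcomm h)
    simp only [LinearMap.comp_apply] at this
    rw [this, hx, map_smul]
  rcases hirr _ hinv with h1 | h1
  · exact absurd h1 hμ
  · refine ⟨μ, ?_⟩
    ext x
    have hx : x ∈ Module.End.eigenspace S μ := h1 ▸ Submodule.mem_top
    rw [Module.End.mem_eigenspace_iff] at hx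
    simpa using hx

/-- Let `𝔥` be a real Lie algebra, `W` a nonzero finite-dimensional real inner product space and
`ρ : 𝔥 → End(W)` a Lie algebra homomorphism with skew-adjoint values acting irreducibly on `W`.
If `dim Hom_𝔥(W, W) ≥ 2`, then there is a skew-adjoint complex structure `J` on `W`
commuting with every `ρ h`. -/
theorem stmt_6 (H : Type*) [LieRing H] [LieAlgebra ℝ H]
    (W : Type*) [NormedAddCommGroup W] [InnerProductSpace ℝ W]
    [FiniteDimensional ℝ W] [Nontrivial W]
    (ρ : H →ₗ⁅ℝ⁆ Module.End ℝ W)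
    (hskew : ∀ (h : H) (x y : W), ⟪ρ h x, y⟫ = -⟪x, ρ h y⟫)
    (hirr : ∀ U : Submodule ℝ W, (∀ (h : H), ∀ x ∈ U, ρ h x ∈ U) → U = ⊥ ∨ U = ⊤)
    (hdim : 2 ≤ Module.finrank ℝ (homH (fun h : H => ρ h) (fun h : H => ρ h))) :
    ∃ J : W →ₗ[ℝ] W,
      (∀ x y : W, ⟪J x, y⟫ = -⟪x, J y⟫) ∧
      J ∘ₗ J = -(LinearMap.id : W →ₗ[ℝ] W) ∧
      ∀ h : H, J ∘ₗ ρ h = ρ h ∘ₗ J := by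
  set K := homH (fun h : H => ρ h) (fun h : H => ρ h) with hK
  -- there is a non-scalar element of the commutant
  have hexists : ∃ l ∈ K, ∀ c : ℝ, l ≠ c • (LinearMap.id : W →ₗ[ℝ] W) := by
    by_contra hc
    push_neg at hc
    have hle : K ≤ Submodule.span ℝ {(LinearMap.id : W →ₗ[ℝ] W)} := by
      intro l hl
      obtain ⟨c, hcl⟩ := hc l hl
      rw [hcl]
      exact Submodule.smul_mem _ _ (Submodule.mem_span_singleton_self _)
    have h1 : Module.finrank ℝ K ≤ Module.finrank ℝ
        (Submodule.span ℝ {(LinearMap.id : W →ₗ[ℝ] W)}) := Submodule.finrank_mono hle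
    have hidne : (LinearMap.id : W →ₗ[ℝ] W) ≠ 0 := by
      obtain ⟨x, hx⟩ := exists_ne (0 : W)
      intro h0
      exact hx (by simpa using congrArg (fun f => f x) h0)
    have h2 : Module.finrank ℝ (Submodule.span ℝ {(LinearMap.id : W →ₗ[ℝ] W)}) = 1 :=
      finrank_span_singleton hidne
    omega
  have hid : LinearMap.adjoint (LinearMap.id : W →ₗ[ℝ] W) = LinearMap.id := by
    symm
    rw [LinearMap.eq_adjoint_iff]
    intro x y
    simp
  obtain ⟨l, hlK, hlns⟩ := hexists
  have hlcomm : ∀ h : H, l ∘ₗ ρ h = ρ h ∘ₗ l := hlK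
  -- adjoint facts
  have hadj : ∀ h : H, LinearMap.adjoint (ρ h) = -ρ h := by
    intro h
    symm
    rw [LinearMap.eq_adjoint_iff]
    intro x y
    simp [hskew h x y]
  have hadjcomm : ∀ h : H, (LinearMap.adjoint l) ∘ₗ ρ h = ρ h ∘ₗ (LinearMap.adjoint l) := by
    intro h
    have := congrArg LinearMap.adjoint (hlcomm h)
    rw [LinearMap.adjoint_comp, LinearMap.adjoint_comp, hadj h] at this
    rw [LinearMap.neg_comp, LinearMap.comp_neg] at this
    have := neg_injective this
    exact this.symm
  -- symmetric part is scalar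
  set S : W →ₗ[ℝ] W := l + LinearMap.adjoint l with hSdef
  have hSsym : S.IsSymmetric := by
    intro x y
    simp only [hSdef, LinearMap.add_apply, inner_add_left, inner_add_right]
    rw [LinearMap.adjoint_inner_left, LinearMap.adjoint_inner_right]
    ring
  have hScomm : ∀ h : H, S ∘ₗ ρ h = ρ h ∘ₗ S := by
    intro h
    simp only [hSdef, LinearMap.add_comp, LinearMap.comp_add, hlcomm h, hadjcomm h]
  obtain ⟨c, hc⟩ := schur_aux6 (fun h : H => ρ h) hirr S hSsym hScomm
  -- antisymmetric part
  set A : W →ₗ[ℝ] W := (2 : ℝ) • l - c • LinearMap.id with hAdef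
  have hAadj : LinearMap.adjoint A = -A := by
    have hl' : LinearMap.adjoint l = c • LinearMap.id - l :=
      eq_sub_of_add_eq' (hc : l + LinearMap.adjoint l = c • LinearMap.id)
    simp only [hAdef, map_sub, map_smul, hl', hid]
    module
  have hAskew : ∀ x y : W, ⟪A x, y⟫ = -⟪x, A y⟫ := by
    intro x y
    have := LinearMap.adjoint_inner_left A y x
    rw [hAadj] at this
    simp only [LinearMap.neg_apply, inner_neg_left] at this
    linarith
  have hAcomm : ∀ h : H, A ∘ₗ ρ h = ρ h ∘ₗ A := by
    intro h
    simp only [hAdef, LinearMap.sub_comp, LinearMap.comp_sub, LinearMap.smul_comp,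
      LinearMap.comp_smul, hlcomm h, LinearMap.id_comp, LinearMap.comp_id]
  have hAne : A ≠ 0 := by
    intro h0
    have h0' : (2 : ℝ) • l - c • (LinearMap.id : W →ₗ[ℝ] W) = 0 := h0
    have h1 : (2 : ℝ) • l = c • (LinearMap.id : W →ₗ[ℝ] W) := sub_eq_zero.mp h0'
    have h2 : l = (2⁻¹ * c : ℝ) • (LinearMap.id : W →ₗ[ℝ] W) := by
      have := congrArg (fun f => ((2:ℝ))⁻¹ • f) h1
      simpa [smul_smul] using this
    exact hlns (2⁻¹ * c) h2
  -- B = -(A ∘ A) is symmetric, commuting, positive; hence a positive scalar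
  set B : W →ₗ[ℝ] W := -(A ∘ₗ A) with hBdef
  have hBadj : LinearMap.adjoint B = B := by
    simp only [hBdef, map_neg, LinearMap.adjoint_comp, hAadj, LinearMap.neg_comp,
      LinearMap.comp_neg, neg_neg]
  have hBsym : B.IsSymmetric := by
    intro x y
    conv_lhs => rw [← hBadj]
    exact LinearMap.adjoint_inner_left B y x
  have hBcomm : ∀ h : H, B ∘ₗ ρ h = ρ h ∘ₗ B := by
    intro h
    simp only [hBdef, LinearMap.neg_comp, LinearMap.comp_neg, neg_inj]
    calc (A ∘ₗ A) ∘ₗ ρ h = A ∘ₗ (A ∘ₗ ρ h) := by rw [LinearMap.comp_assoc]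
      _ = A ∘ₗ (ρ h ∘ₗ A) := by rw [hAcomm h]
      _ = (A ∘ₗ ρ h) ∘ₗ A := by rw [LinearMap.comp_assoc]
      _ = ρ h ∘ₗ (A ∘ₗ A) := by rw [hAcomm h, LinearMap.comp_assoc]
  obtain ⟨d, hd⟩ := schur_aux6 (fun h : H => ρ h) hirr B hBsym hBcomm
  -- d > 0
  obtain ⟨x₀, hx₀⟩ : ∃ x : W, A x ≠ 0 := by
    by_contra hcc
    push_neg at hcc
    exact hAne (LinearMap.ext fun x => by simpa using hcc x)
  have hx₀ne : x₀ ≠ 0 := fun h => hx₀ (by simp [h])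
  have hdpos : 0 < d := by
    have h1 : ⟪B x₀, x₀⟫ = ‖A x₀‖ ^ 2 := by
      simp only [hBdef, LinearMap.neg_apply, LinearMap.comp_apply, inner_neg_left]
      rw [hAskew (A x₀) x₀, neg_neg, real_inner_self_eq_norm_sq]
    have h2 : ⟪B x₀, x₀⟫ = d * ‖x₀‖ ^ 2 := by
      rw [hd]
      simp only [LinearMap.smul_apply, LinearMap.id_apply, real_inner_smul_left]
      rw [← real_inner_self_eq_norm_sq]
    have h3 : 0 < ‖A x₀‖ ^ 2 := pow_pos (norm_pos_iff.mpr hx₀) 2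
    have h4 : 0 < ‖x₀‖ ^ 2 := pow_pos (norm_pos_iff.mpr hx₀ne) 2
    nlinarith [h1, h2]
  -- conclude
  refine ⟨(Real.sqrt d)⁻¹ • A, ?_, ?_, ?_⟩
  · intro x y
    simp only [LinearMap.smul_apply, real_inner_smul_left, real_inner_smul_right]
    rw [hAskew x y]
    ring
  · have hAA : A ∘ₗ A = -(d • (LinearMap.id : W →ₗ[ℝ] W)) :=
      neg_eq_iff_eq_neg.mp (hd : -(A ∘ₗ A) = d • LinearMap.id)
    have hsq : (Real.sqrt d)⁻¹ * (Real.sqrt d)⁻¹ = d⁻¹ := by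
      rw [← mul_inv]
      rw [Real.mul_self_sqrt hdpos.le]
    rw [LinearMap.smul_comp, LinearMap.comp_smul, hAA, smul_smul, hsq]
    rw [smul_neg, smul_smul, inv_mul_cancel₀ hdpos.ne', one_smul]
  · intro h
    rw [LinearMap.smul_comp, LinearMap.comp_smul, hAcomm h]
end

section
/- Let 𝔥 be a real Lie algebra, W a nonzero finite-dimensional real inner product space, and ρ : 𝔥 → End(W) a Lie algebra homomorphism such that ρ(h) is skew-adjoint for every h ∈ 𝔥 and such that {ρ(h) : h ∈ 𝔥} acts irreducibly on W. If the real dimension of Hom_𝔥(W,W) := {λ ∈ End(W) : λ∘ρ(h) = ρ(h)∘λ for all h ∈ 𝔥} equals 4, then there exist skew-adjoint linear endomorphisms I and J of W with I ∘ I = J ∘ J = −id_W, I ∘ J = −J ∘ I, and I∘ρ(h) = ρ(h)∘I and J∘ρ(h) = ρ(h)∘J for all h ∈ 𝔥 (so that I, J, and K := I∘J equip W with the structure of a quaternionic Hermitian vector space on which ρ(𝔥) acts by quaternionic-linear endomorphisms). -/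
open scoped RealInnerProductSpace

attribute [local instance 100] LieRing.ofAssociativeRing

/-- The submodule of skew-adjoint endomorphisms. -/
def skewSub (W : Type*) [NormedAddCommGroup W] [InnerProductSpace ℝ W] :
    Submodule ℝ (W →ₗ[ℝ] W) where
  carrier := {l | ∀ x y : W, ⟪l x, y⟫ = -⟪x, l y⟫}
  add_mem' := by
    intro a b ha hb x y
    simp only [LinearMap.add_apply, inner_add_left, inner_add_right, ha x y, hb x y]
    ring
  zero_mem' := by intro x y; simp
  smul_mem' := by
    intro c a ha x y
    simp only [LinearMap.smul_apply, real_inner_smul_left, real_inner_smul_right, ha x y]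
    ring

/-- The submodule of self-adjoint endomorphisms. -/
def symSub (W : Type*) [NormedAddCommGroup W] [InnerProductSpace ℝ W] :
    Submodule ℝ (W →ₗ[ℝ] W) where
  carrier := {l | ∀ x y : W, ⟪l x, y⟫ = ⟪x, l y⟫}
  add_mem' := by
    intro a b ha hb x y
    simp only [LinearMap.add_apply, inner_add_left, inner_add_right, ha x y, hb x y]
  zero_mem' := by intro x y; simp
  smul_mem' := by
    intro c a ha x y
    simp only [LinearMap.smul_apply, real_inner_smul_left, real_inner_smul_right, ha x y]

/-- Schur: a self-adjoint equivariant endomorphism of an irreducible rep is scalar. -/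
lemma schur_sym {H : Type*} {W : Type*} [NormedAddCommGroup W] [InnerProductSpace ℝ W]
    [FiniteDimensional ℝ W] [Nontrivial W] {ρW : H → (W →ₗ[ℝ] W)}
    (hirr : ∀ U : Submodule ℝ W, (∀ h : H, ∀ x ∈ U, ρW h x ∈ U) → U = ⊥ ∨ U = ⊤)
    {l : W →ₗ[ℝ] W} (hl : l ∈ homH ρW ρW) (hsym : l ∈ symSub W) :
    ∃ c : ℝ, l = c • LinearMap.id := by
  have hsymm : (l : W →ₗ[ℝ] W).IsSymmetric := fun x y => hsym x y
  have hev := hsymm.hasEigenvalue_iSup_of_finiteDimensional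
  set μ : ℝ := ↑(⨆ x : { x : W // x ≠ 0 }, RCLike.re ⟪l x, (x : W)⟫ / ‖(x : W)‖ ^ 2) with hμ
  set E := Module.End.eigenspace (l : Module.End ℝ W) μ with hE
  have hinv : ∀ h : H, ∀ x ∈ E, ρW h x ∈ E := by
    intro h x hx
    rw [Module.End.mem_eigenspace_iff] at hx ⊢
    have hcomm := LinearMap.ext_iff.mp (hl h) x
    simp only [LinearMap.comp_apply] at hcomm
    rw [hcomm, hx, map_smul]
  rcases hirr E hinv with hbot | htop
  · exact absurd hbot hev
  · refine ⟨μ, LinearMap.ext fun x => ?_⟩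
    have hx : x ∈ E := htop ▸ Submodule.mem_top
    rw [Module.End.mem_eigenspace_iff] at hx
    simpa using hx

/-- Let `𝔥` be a real Lie algebra, `W` a nonzero finite-dimensional real inner product space and
`ρ : 𝔥 → End(W)` a Lie algebra homomorphism with skew-adjoint values acting irreducibly on `W`.
If `dim Hom_𝔥(W, W) = 4`, then there are two anticommuting skew-adjoint complex structures
`I, J` on `W` commuting with every `ρ h` (a quaternionic Hermitian structure). -/
theorem stmt_7 (H : Type*) [LieRing H] [LieAlgebra ℝ H]
    (W : Type*) [NormedAddCommGroup W] [InnerProductSpace ℝ W]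
    [FiniteDimensional ℝ W] [Nontrivial W]
    (ρ : H →ₗ⁅ℝ⁆ Module.End ℝ W)
    (hskew : ∀ (h : H) (x y : W), ⟪ρ h x, y⟫ = -⟪x, ρ h y⟫)
    (hirr : ∀ U : Submodule ℝ W, (∀ (h : H), ∀ x ∈ U, ρ h x ∈ U) → U = ⊥ ∨ U = ⊤)
    (hdim : Module.finrank ℝ (homH (fun h : H => ρ h) (fun h : H => ρ h)) = 4) :
    ∃ I J : W →ₗ[ℝ] W,
      (∀ x y : W, ⟪I x, y⟫ = -⟪x, I y⟫) ∧
      (∀ x y : W, ⟪J x, y⟫ = -⟪x, J y⟫) ∧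
      I ∘ₗ I = -(LinearMap.id : W →ₗ[ℝ] W) ∧
      J ∘ₗ J = -(LinearMap.id : W →ₗ[ℝ] W) ∧
      I ∘ₗ J = -(J ∘ₗ I) ∧
      (∀ h : H, I ∘ₗ ρ h = ρ h ∘ₗ I) ∧
      (∀ h : H, J ∘ₗ ρ h = ρ h ∘ₗ J) := by
    classical
  set ρ' : H → (W →ₗ[ℝ] W) := fun h => ρ h with hρ'
  set D : Submodule ℝ (W →ₗ[ℝ] W) := homH ρ' ρ' with hDdef
  -- adjoints of ρ h
  have hadj : ∀ h : H, LinearMap.adjoint (ρ' h) = -ρ' h := by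
    intro h
    refine ((LinearMap.eq_adjoint_iff (-(ρ' h)) (ρ' h)).2 fun x y => ?_).symm
    rw [LinearMap.neg_apply, inner_neg_left, hskew h x y, neg_neg]
  -- D is closed under adjoint
  have hDadj : ∀ l ∈ D, LinearMap.adjoint l ∈ D := by
    intro l hl h
    have h1 := congrArg LinearMap.adjoint (hl h)
    rw [LinearMap.adjoint_comp, LinearMap.adjoint_comp, hadj h, LinearMap.neg_comp,
      LinearMap.comp_neg, neg_inj] at h1
    exact h1.symm
  -- D is closed under composition
  have hDmul : ∀ a ∈ D, ∀ b ∈ D, a ∘ₗ b ∈ D := by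
    intro a ha b hb h
    rw [LinearMap.comp_assoc, hb h, ← LinearMap.comp_assoc, ha h, LinearMap.comp_assoc]
  have hidD : (LinearMap.id : W →ₗ[ℝ] W) ∈ D := by
    intro h; rw [LinearMap.id_comp, LinearMap.comp_id]
  set Dsym : Submodule ℝ (W →ₗ[ℝ] W) := D ⊓ symSub W with hDsymdef
  set Dsk : Submodule ℝ (W →ₗ[ℝ] W) := D ⊓ skewSub W with hDskdef
  have hidne : (LinearMap.id : W →ₗ[ℝ] W) ≠ 0 := by
    obtain ⟨x, hx⟩ := exists_ne (0 : W)
    intro hcon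
    exact hx (by simpa using LinearMap.ext_iff.mp hcon x)
  -- Dsym is spanned by the identity
  have hDsym_eq : Dsym = ℝ ∙ (LinearMap.id : W →ₗ[ℝ] W) := by
    apply le_antisymm
    · rintro l ⟨hlD, hlsym⟩
      obtain ⟨c, rfl⟩ := schur_sym hirr hlD hlsym
      exact Submodule.mem_span_singleton.2 ⟨c, rfl⟩
    · rw [Submodule.span_singleton_le_iff_mem]
      exact ⟨hidD, fun x y => rfl⟩
  have hfinsym : Module.finrank ℝ Dsym = 1 := by
    rw [hDsym_eq]; exact finrank_span_singleton hidne
  -- sup and inf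
  have hsup : Dsym ⊔ Dsk = D := by
    apply le_antisymm (sup_le inf_le_left inf_le_left)
    intro l hl
    have hdecomp : l = (1/2 : ℝ) • (l + LinearMap.adjoint l)
        + (1/2 : ℝ) • (l - LinearMap.adjoint l) := by
      ext x
      simp only [LinearMap.add_apply, LinearMap.smul_apply, LinearMap.sub_apply]
      module
    rw [hdecomp]
    refine Submodule.add_mem_sup (Submodule.smul_mem _ _ ⟨D.add_mem hl (hDadj l hl), ?_⟩)
      (Submodule.smul_mem _ _ ⟨D.sub_mem hl (hDadj l hl), ?_⟩)
    · intro x y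
      simp only [LinearMap.add_apply, inner_add_left, inner_add_right,
        LinearMap.adjoint_inner_left, LinearMap.adjoint_inner_right]
      ring
    · intro x y
      simp only [LinearMap.sub_apply, inner_sub_left, inner_sub_right,
        LinearMap.adjoint_inner_left, LinearMap.adjoint_inner_right]
      ring
  have hinf : Dsym ⊓ Dsk = ⊥ := by
    rw [eq_bot_iff]
    rintro l ⟨⟨-, hs⟩, -, hk⟩
    have hzero : ∀ x y : W, ⟪l x, y⟫ = 0 := by
      intro x y
      have h1 := hs x y
      have h2 := hk x y
      linarith
    have : l = 0 := by
      ext x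
      exact inner_self_eq_zero.mp (hzero x (l x))
    simp [this]
  have hfinDsk : Module.finrank ℝ Dsk = 3 := by
    have h := Submodule.finrank_sup_add_finrank_inf_eq Dsym Dsk
    rw [hsup, hinf] at h
    rw [hdim, hfinsym, finrank_bot] at h
    omega
  -- squares of skew elements of D
  have hsq : ∀ a, a ∈ Dsk → a ≠ 0 → ∃ c : ℝ, c < 0 ∧ a ∘ₗ a = c • LinearMap.id := by
    rintro a ⟨haD, hask⟩ ha0
    have hmem : a ∘ₗ a ∈ D := hDmul a haD a haD
    have hsymm : a ∘ₗ a ∈ symSub W := by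
      intro x y
      have h1 := hask (a x) y
      have h2 := hask x (a y)
      simp only [LinearMap.comp_apply]
      rw [h1, h2, neg_neg]
    obtain ⟨c, hc⟩ := schur_sym hirr hmem hsymm
    obtain ⟨x, hx⟩ : ∃ x, a x ≠ 0 := by
      by_contra hcon
      push_neg at hcon
      exact ha0 (LinearMap.ext fun x => by simp [hcon x])
    have hxne : x ≠ 0 := fun h0 => hx (by simp [h0])
    have heval : c * ‖x‖ ^ 2 = -‖a x‖ ^ 2 := by
      have h1 := congrArg (fun f : W →ₗ[ℝ] W => ⟪f x, x⟫) hc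
      simp only [LinearMap.comp_apply, LinearMap.smul_apply, LinearMap.id_apply,
        real_inner_smul_left] at h1
      rw [hask (a x) x, real_inner_self_eq_norm_sq, real_inner_self_eq_norm_sq] at h1
      linarith
    have hxpos : (0:ℝ) < ‖x‖ ^ 2 := pow_pos (norm_pos_iff.mpr hxne) 2
    have haxpos : (0:ℝ) < ‖a x‖ ^ 2 := pow_pos (norm_pos_iff.mpr hx) 2
    exact ⟨c, by nlinarith, hc⟩
  -- normalization
  have hnorm : ∀ a, a ∈ Dsk → a ≠ 0 →
      ∃ t : ℝ, 0 < t ∧ (t • a) ∘ₗ (t • a) = -(LinearMap.id : W →ₗ[ℝ] W) := by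
    intro a ha ha0
    obtain ⟨c, hc0, hc⟩ := hsq a ha ha0
    have hsqrtpos : 0 < Real.sqrt (-c) := Real.sqrt_pos.2 (by linarith)
    have hcne : Real.sqrt (-c) ≠ 0 := ne_of_gt hsqrtpos
    have hcc : Real.sqrt (-c) * Real.sqrt (-c) = -c := Real.mul_self_sqrt (by linarith)
    refine ⟨(Real.sqrt (-c))⁻¹, inv_pos.2 hsqrtpos, ?_⟩
    have hkey : (Real.sqrt (-c))⁻¹ * (Real.sqrt (-c))⁻¹ * c = -1 := by
      field_simp
      nlinarith [hcc]
    rw [LinearMap.smul_comp, LinearMap.comp_smul, hc, smul_smul, smul_smul, hkey]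
    exact (neg_one_smul ℝ _).trans rfl
  -- pick I
  have hDskne : Dsk ≠ ⊥ := by
    intro hcon
    rw [hcon, finrank_bot] at hfinDsk
    omega
  obtain ⟨a, haDsk, ha0⟩ := Submodule.exists_mem_ne_zero_of_ne_bot hDskne
  obtain ⟨s, hs0, hsI⟩ := hnorm a haDsk ha0
  set I : W →ₗ[ℝ] W := s • a with hIdef
  have hIDsk : I ∈ Dsk := Dsk.smul_mem s haDsk
  have hI0 : I ≠ 0 := by
    intro hcon
    have : a = 0 := by
      have := congrArg (fun f : W →ₗ[ℝ] W => s⁻¹ • f) hcon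
      simpa [hIdef, smul_smul, inv_mul_cancel₀ (ne_of_gt hs0)] using this
    exact ha0 this
  -- pick base point
  obtain ⟨x₀, hx₀⟩ := exists_ne (0 : W)
  -- functional measuring the anticommutator with I
  set φ : (W →ₗ[ℝ] W) →ₗ[ℝ] ℝ :=
    { toFun := fun b => ⟪(I ∘ₗ b + b ∘ₗ I) x₀, x₀⟫
      map_add' := by
        intro b₁ b₂
        simp only [LinearMap.comp_add, LinearMap.add_comp, LinearMap.add_apply,
          inner_add_left, LinearMap.comp_apply]
        ring
      map_smul' := by
        intro c b
        simp only [LinearMap.comp_smul, LinearMap.smul_comp, LinearMap.add_apply,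
          LinearMap.smul_apply, inner_add_left, real_inner_smul_left, RingHom.id_apply,
          smul_eq_mul, LinearMap.comp_apply]
        ring } with hφdef
  set ψ : Dsk →ₗ[ℝ] ℝ := φ ∘ₗ Dsk.subtype with hψdef
  have hker : LinearMap.ker ψ ≠ ⊥ := by
    intro hcon
    have h1 := LinearMap.finrank_range_add_finrank_ker ψ
    have h2 : Module.finrank ℝ (LinearMap.range ψ) ≤ 1 := by
      have := Submodule.finrank_le (LinearMap.range ψ)
      simpa using this
    rw [hcon, finrank_bot, hfinDsk] at h1
    omega
  obtain ⟨j, hjker, hj0⟩ := Submodule.exists_mem_ne_zero_of_ne_bot hker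
  have hJ₀Dsk : (j : W →ₗ[ℝ] W) ∈ Dsk := j.2
  obtain ⟨hJ₀D, hJ₀sk⟩ := hJ₀Dsk
  have hJ₀0 : (j : W →ₗ[ℝ] W) ≠ 0 := fun hcon => hj0 (Subtype.ext hcon)
  obtain ⟨hID, hIsk⟩ := hIDsk
  -- the anticommutator is zero
  have hanti : I ∘ₗ (j : W →ₗ[ℝ] W) = -((j : W →ₗ[ℝ] W) ∘ₗ I) := by
    set A : W →ₗ[ℝ] W := I ∘ₗ (j : W →ₗ[ℝ] W) + (j : W →ₗ[ℝ] W) ∘ₗ I with hAdef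
    have hAD : A ∈ D := D.add_mem (hDmul _ hID _ hJ₀D) (hDmul _ hJ₀D _ hID)
    have hAsym : A ∈ symSub W := by
      intro x y
      simp only [hAdef, LinearMap.add_apply, LinearMap.comp_apply, inner_add_left,
        inner_add_right]
      rw [hIsk ((j : W →ₗ[ℝ] W) x) y, hJ₀sk x (I y), hJ₀sk (I x) y, hIsk x ((j : W →ₗ[ℝ] W) y)]
      ring
    obtain ⟨c, hc⟩ := schur_sym hirr hAD hAsym
    have hφA : ⟪A x₀, x₀⟫ = 0 := hjker
    have hc0 : c = 0 := by
      rw [hc] at hφA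
      simp only [LinearMap.smul_apply, LinearMap.id_apply, real_inner_smul_left,
        real_inner_self_eq_norm_sq] at hφA
      have : ‖x₀‖ ^ 2 ≠ 0 := ne_of_gt (pow_pos (norm_pos_iff.mpr hx₀) 2)
      rcases mul_eq_zero.mp hφA with h | h
      · exact h
      · exact absurd h this
    have hA0 : A = 0 := by rw [hc, hc0, zero_smul]
    exact eq_neg_of_add_eq_zero_left (hAdef.symm.trans hA0)
  obtain ⟨t, ht0, htJ⟩ := hnorm (j : W →ₗ[ℝ] W) ⟨hJ₀D, hJ₀sk⟩ hJ₀0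
  refine ⟨I, t • (j : W →ₗ[ℝ] W), fun x y => hIsk x y, ?_, ?_, htJ, ?_, ?_, ?_⟩
  · intro x y
    simp only [LinearMap.smul_apply, real_inner_smul_left, real_inner_smul_right,
      hJ₀sk x y]
    ring
  · exact hsI
  · ext x
    have hpt := LinearMap.ext_iff.mp hanti x
    simp only [LinearMap.comp_apply, LinearMap.neg_apply] at hpt
    simp only [LinearMap.comp_apply, LinearMap.smul_apply, LinearMap.neg_apply,
      map_smul, hpt, smul_neg]
  · intro h; exact hID h
  · intro h
    have := (Dsk.smul_mem t ⟨hJ₀D, hJ₀sk⟩ : t • (j : W →ₗ[ℝ] W) ∈ Dsk)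
    exact this.1 h
end

section
/- Let V be a finite-dimensional real inner product space and W ⊆ V a linear subspace with orthogonal complement U := W^⊥. Let A, A₁, A₂ be skew-adjoint linear endomorphisms of V, each of which maps W into U and U into W. Suppose that the restrictions A₁|W and A₂|W are injective, that A₁(W) ∩ A₂(W) = {0}, and that A commutes with both A₁ and A₂. Then A = 0. -/
open scoped RealInnerProductSpace

private lemma surj_aux {V : Type*} [NormedAddCommGroup V] [InnerProductSpace ℝ V]
    [FiniteDimensional ℝ V] (W : Submodule ℝ V) (B : V →ₗ[ℝ] V)
    (hskew : ∀ x y : V, ⟪B x, y⟫ = -⟪x, B y⟫)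
    (hmapW : ∀ x ∈ W, B x ∈ Wᗮ)
    (hmapU : ∀ x ∈ Wᗮ, B x ∈ W)
    (hinj : ∀ x ∈ W, B x = 0 → x = 0) :
    ∀ w ∈ W, w ∈ (Wᗮ).map B := by
  intro w hw
  set M := (Wᗮ).map B with hM
  have hMW : M ≤ W := by
    rintro _ ⟨u, hu, rfl⟩; exact hmapU u hu
  have htop : M ⊔ Mᗮ = ⊤ := Submodule.sup_orthogonal_of_hasOrthogonalProjection
  have hmem : w ∈ M ⊔ Mᗮ := by rw [htop]; trivial
  rcases Submodule.mem_sup.mp hmem with ⟨m, hm, n, hn, rfl⟩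
  have hnW : n ∈ W := by
    have := W.sub_mem hw (hMW hm)
    simpa using this
  have hBn0 : B n = 0 := by
    have hBnU : B n ∈ Wᗮ := hmapW n hnW
    have h1 : ⟪B (B n), n⟫ = 0 := by
      exact (Submodule.mem_orthogonal M n).mp hn _ ⟨B n, hBnU, rfl⟩
    have h2 : ⟪B n, B n⟫ = 0 := by
      have := hskew (B n) n
      linarith [this, h1]
    exact inner_self_eq_zero.mp h2
  have hn0 : n = 0 := hinj n hnW hBn0
  simpa [hn0] using hm

/-- Let `V` be a finite-dimensional real inner product space and `W ⊆ V` a subspace with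
orthogonal complement `U = Wᗮ`.  Let `A, A₁, A₂` be skew-adjoint endomorphisms of `V`
mapping `W` into `U` and `U` into `W`.  If `A₁|W`, `A₂|W` are injective, the images
`A₁(W)` and `A₂(W)` intersect trivially, and `A` commutes with `A₁` and `A₂`, then `A = 0`. -/
theorem stmt_10 (V : Type*) [NormedAddCommGroup V] [InnerProductSpace ℝ V]
    [FiniteDimensional ℝ V]
    (W : Submodule ℝ V)
    (A A₁ A₂ : V →ₗ[ℝ] V)
    (hAskew : ∀ x y : V, ⟪A x, y⟫ = -⟪x, A y⟫)
    (hA₁skew : ∀ x y : V, ⟪A₁ x, y⟫ = -⟪x, A₁ y⟫)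
    (hA₂skew : ∀ x y : V, ⟪A₂ x, y⟫ = -⟪x, A₂ y⟫)
    (hAmapW : ∀ x ∈ W, A x ∈ Wᗮ) (hAmapU : ∀ x ∈ Wᗮ, A x ∈ W)
    (hA₁mapW : ∀ x ∈ W, A₁ x ∈ Wᗮ) (hA₁mapU : ∀ x ∈ Wᗮ, A₁ x ∈ W)
    (hA₂mapW : ∀ x ∈ W, A₂ x ∈ Wᗮ) (hA₂mapU : ∀ x ∈ Wᗮ, A₂ x ∈ W)
    (hinj₁ : ∀ x ∈ W, A₁ x = 0 → x = 0)
    (hinj₂ : ∀ x ∈ W, A₂ x = 0 → x = 0)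
    (hint : W.map A₁ ⊓ W.map A₂ = ⊥)
    (hcomm₁ : A ∘ₗ A₁ = A₁ ∘ₗ A)
    (hcomm₂ : A ∘ₗ A₂ = A₂ ∘ₗ A) :
    A = 0 := by
  -- Step 1: A vanishes on W.
  have stepW : ∀ w ∈ W, A w = 0 := by
    intro w hw
    -- A w ∈ A₁(W)
    have h1 : A w ∈ W.map A₁ := by
      obtain ⟨u, hu, hueq⟩ := surj_aux W A₁ hA₁skew hA₁mapW hA₁mapU hinj₁ w hw
      have : A w = A₁ (A u) := by
        have := congrArg (fun f => f u) hcomm₁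
        simp only [LinearMap.comp_apply] at this
        rw [← hueq]; exact this
      exact ⟨A u, hAmapU u hu, this.symm⟩
    have h2 : A w ∈ W.map A₂ := by
      obtain ⟨u, hu, hueq⟩ := surj_aux W A₂ hA₂skew hA₂mapW hA₂mapU hinj₂ w hw
      have : A w = A₂ (A u) := by
        have := congrArg (fun f => f u) hcomm₂
        simp only [LinearMap.comp_apply] at this
        rw [← hueq]; exact this
      exact ⟨A u, hAmapU u hu, this.symm⟩
    have : A w ∈ W.map A₁ ⊓ W.map A₂ := ⟨h1, h2⟩
    rw [hint] at this
    simpa using this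
  -- Step 2: A vanishes on Wᗮ.
  have stepU : ∀ u ∈ Wᗮ, A u = 0 := by
    intro u hu
    have hAuW : A u ∈ W := hAmapU u hu
    have hAuU : A u ∈ Wᗮ := by
      intro x hx
      have := hAskew u x
      rw [stepW x hx] at this
      simp at this
      rw [real_inner_comm]
      linarith [this]
    have : ⟪A u, A u⟫ = 0 := hAuU (A u) hAuW
    exact inner_self_eq_zero.mp (by rw [real_inner_comm] at this; exact this)
  -- Conclude.
  ext v
  have hmem : v ∈ W ⊔ Wᗮ := by
    rw [Submodule.sup_orthogonal_of_hasOrthogonalProjection]; trivial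
  rcases Submodule.mem_sup.mp hmem with ⟨w, hw, u, hu, rfl⟩
  simp [stepW w hw, stepU u hu]
end

section
/- Let W and U be finite-dimensional real inner product spaces and h : W × W → U a symmetric bilinear map. For ξ ∈ U, let S_ξ denote the self-adjoint endomorphism of W determined by ⟨S_ξ x, y⟩ = ⟨h(x,y), ξ⟩ for all x, y ∈ W. Suppose A₁ is a skew-adjoint endomorphism of W and A₂ is a skew-adjoint endomorphism of U such that h(x, A₁ y) = A₂ h(x, y) for all x, y ∈ W. Then A₁ ∘ S_ξ = −S_ξ ∘ A₁ for every ξ ∈ U, and consequently S_ξ ∘ S_η ∘ A₁ = A₁ ∘ S_ξ ∘ S_η for all ξ, η ∈ U. -/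
open scoped RealInnerProductSpace

/-- Let `W`, `U` be finite-dimensional real inner product spaces, `h : W × W → U` a symmetric
bilinear map, and for `ξ ∈ U` let `S ξ` be the (self-adjoint) shape operator determined by
`⟪S ξ x, y⟫ = ⟪h x y, ξ⟫`.  If `A₁` is skew-adjoint on `W`, `A₂` is skew-adjoint on `U`, and
`h x (A₁ y) = A₂ (h x y)` for all `x, y`, then `A₁ ∘ S ξ = -(S ξ ∘ A₁)` for all `ξ`, and
consequently `S ξ ∘ S η ∘ A₁ = A₁ ∘ S ξ ∘ S η` for all `ξ, η`. -/
theorem stmt_11 (W U : Type*)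
    [NormedAddCommGroup W] [InnerProductSpace ℝ W] [FiniteDimensional ℝ W]
    [NormedAddCommGroup U] [InnerProductSpace ℝ U] [FiniteDimensional ℝ U]
    (h : W →ₗ[ℝ] W →ₗ[ℝ] U)
    (hsymm : ∀ x y : W, h x y = h y x)
    (S : U → (W →ₗ[ℝ] W))
    (hS : ∀ (ξ : U) (x y : W), ⟪S ξ x, y⟫ = ⟪h x y, ξ⟫)
    (A₁ : W →ₗ[ℝ] W) (hA₁ : ∀ x y : W, ⟪A₁ x, y⟫ = -⟪x, A₁ y⟫)
    (A₂ : U →ₗ[ℝ] U) (hA₂ : ∀ ξ η : U, ⟪A₂ ξ, η⟫ = -⟪ξ, A₂ η⟫)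
    (hcomp : ∀ x y : W, h x (A₁ y) = A₂ (h x y)) :
    (∀ ξ : U, A₁ ∘ₗ S ξ = -(S ξ ∘ₗ A₁)) ∧
    (∀ ξ η : U, S ξ ∘ₗ S η ∘ₗ A₁ = A₁ ∘ₗ S ξ ∘ₗ S η) := by
  have key : ∀ ξ : U, A₁ ∘ₗ S ξ = -(S ξ ∘ₗ A₁) := by
    intro ξ
    ext x
    apply ext_inner_right ℝ
    intro y
    have h1 : ⟪A₁ (S ξ x), y⟫ = ⟪h x y, A₂ ξ⟫ := by
      rw [hA₁, hS, hcomp, hA₂]; ring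
    have h2 : ⟪S ξ (A₁ x), y⟫ = -⟪h x y, A₂ ξ⟫ := by
      rw [hS, hsymm, hcomp]
      rw [hA₂, hsymm]
    simp only [LinearMap.comp_apply, LinearMap.neg_apply, inner_neg_left, h1, h2]
    ring
  have keyp : ∀ (ξ : U) (x : W), A₁ (S ξ x) = -S ξ (A₁ x) := by
    intro ξ x
    have := LinearMap.congr_fun (key ξ) x
    simpa using this
  refine ⟨key, fun ξ η => ?_⟩
  ext x
  simp only [LinearMap.comp_apply, keyp, map_neg, neg_neg]
end

section
/- Under the stated assumptions, for all x, y, z ∈ W: (1) [Γ̂(x), Γ̂(y)] = (0, −R(x,y) + β(x)∘β(y) − β(y)∘β(x)); in particular [Γ̂(x), Γ̂(y)] ∈ {0} × 𝔥; (2) the endomorphism B := −R(x,y) + β(x)∘β(y) − β(y)∘β(x) of V maps W into W; and (3) [[Γ̂(x), Γ̂(y)], Γ̂(z)] = Γ̂(B z). -/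
open scoped RealInnerProductSpace

/-- Lemma 7 of the paper; extrinsic analogue of the Nomizu construction.
`V` is a finite-dimensional real inner product space, `H ⊆ 𝔰𝔬(V)` a Lie subalgebra of
skew-adjoint endomorphisms, and the product space `L = V × H` carries a Lie algebra
structure `br` with `[(0,A),(0,B)] = (0, A∘B − B∘A)`, `[(0,A),(v,0)] = (A v, 0)` and
`[(v,0),(w,0)] = (0, −R(v,w)) ∈ {0} × H`.  `W ⊆ V` is a subspace, `b` a symmetric bilinear
map on `W` with values orthogonal to `W`, `N` the span of its values, `O = W ⊕ N`, `bb = 𝐛`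
the associated skew-adjoint maps, and `β : W → H` satisfies `β(x)|O = 𝐛(x)|O` with
`β(x)(O) ⊆ O`.  Assuming curvature invariance of `W` and `O`, semiparallelity of `b`, and
that elements of `H` vanishing on `O` are zero, for `Γ̂(x) := (x, β(x))` and all
`x, y, z ∈ W`:
(1) `[Γ̂(x), Γ̂(y)] = (0, −R(x,y) + β(x)∘β(y) − β(y)∘β(x)) ∈ {0} × H`;
(2) `B := −R(x,y) + β(x)∘β(y) − β(y)∘β(x)` maps `W` into `W`;
(3) `[[Γ̂(x), Γ̂(y)], Γ̂(z)] = Γ̂(B z)`. -/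
theorem stmt_14
    (V : Type*) [NormedAddCommGroup V] [InnerProductSpace ℝ V] [FiniteDimensional ℝ V]
    (H : Submodule ℝ (V →ₗ[ℝ] V))
    (hHskew : ∀ A ∈ H, ∀ u v : V, ⟪A u, v⟫ = -⟪u, A v⟫)
    (hHlie : ∀ A ∈ H, ∀ B ∈ H, A ∘ₗ B - B ∘ₗ A ∈ H)
    -- the Lie algebra structure on `L = V × H`
    (br : (V × H) →ₗ[ℝ] (V × H) →ₗ[ℝ] (V × H))
    (hbr_alt : ∀ p : V × H, br p p = 0)
    (hbr_jacobi : ∀ p q r : V × H,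
      br p (br q r) + br q (br r p) + br r (br p q) = 0)
    (hbr_hh : ∀ A B : H, br (0, A) (0, B) =
      (0, ⟨(A : V →ₗ[ℝ] V) ∘ₗ (B : V →ₗ[ℝ] V) - (B : V →ₗ[ℝ] V) ∘ₗ (A : V →ₗ[ℝ] V),
           hHlie A A.2 B B.2⟩))
    (hbr_hv : ∀ (A : H) (v : V), br (0, A) (v, 0) = ((A : V →ₗ[ℝ] V) v, 0))
    (hbr_vv : ∀ v w : V, (br (v, 0) (w, 0)).1 = 0)
    (R : V → V → (V →ₗ[ℝ] V))
    (hR : ∀ v w : V, ((br (v, 0) (w, 0)).2 : V →ₗ[ℝ] V) = -R v w)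
    -- the 2-jet data
    (W : Submodule ℝ V)
    (b : V →ₗ[ℝ] V →ₗ[ℝ] V)
    (hb_symm : ∀ x ∈ W, ∀ y ∈ W, b x y = b y x)
    (hb_perp : ∀ x ∈ W, ∀ y ∈ W, ∀ w ∈ W, ⟪b x y, w⟫ = 0)
    (N O : Submodule ℝ V)
    (hN : N = Submodule.span ℝ {u : V | ∃ x ∈ W, ∃ y ∈ W, b x y = u})
    (hO : O = W ⊔ N)
    -- the associated skew-adjoint maps `𝐛(x)`
    (bb : V → (V →ₗ[ℝ] V))
    (hbb_skew : ∀ x ∈ W, ∀ u v : V, ⟪bb x u, v⟫ = -⟪u, bb x v⟫)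
    (hbb_W : ∀ x ∈ W, ∀ y ∈ W, bb x y = b x y)
    (hbb_N : ∀ x ∈ W, ∀ ξ ∈ N, bb x ξ ∈ W)
    (hbb_perp : ∀ x ∈ W, ∀ v ∈ Oᗮ, bb x v = 0)
    -- assumption (i): `W` is curvature invariant
    (hcurvW : ∀ x ∈ W, ∀ y ∈ W, ∀ z ∈ W, R x y z ∈ W)
    -- assumption (ii): `O` is curvature invariant
    (hcurvO : ∀ x ∈ W, ∀ y ∈ W, ∀ v ∈ O, R x y v ∈ O)
    -- assumption (iii): semiparallelity
    (hsemi : ∀ x ∈ W, ∀ y ∈ W, ∀ z ∈ W, ∀ v ∈ O,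
      bb (R x y z - (bb x (bb y z) - bb y (bb x z))) v =
        (R x y - (bb x ∘ₗ bb y - bb y ∘ₗ bb x)) (bb z v) -
          bb z ((R x y - (bb x ∘ₗ bb y - bb y ∘ₗ bb x)) v))
    -- assumption (iv): the lift `β`
    (β : V → H)
    (hβO : ∀ x ∈ W, ∀ v ∈ O, (β x : V →ₗ[ℝ] V) v ∈ O)
    (hβ : ∀ x ∈ W, ∀ v ∈ O, (β x : V →ₗ[ℝ] V) v = bb x v)
    -- assumption (v): uniqueness
    (huniq : ∀ A ∈ H, (∀ v ∈ O, A v = 0) → A = 0) :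
    ∀ x ∈ W, ∀ y ∈ W, ∀ z ∈ W,
      ((br (x, β x) (y, β y)).1 = 0 ∧
        ((br (x, β x) (y, β y)).2 : V →ₗ[ℝ] V) =
          -R x y + ((β x : V →ₗ[ℝ] V) ∘ₗ (β y : V →ₗ[ℝ] V) -
            (β y : V →ₗ[ℝ] V) ∘ₗ (β x : V →ₗ[ℝ] V))) ∧
      (∀ w ∈ W,
        (-R x y + ((β x : V →ₗ[ℝ] V) ∘ₗ (β y : V →ₗ[ℝ] V) -
          (β y : V →ₗ[ℝ] V) ∘ₗ (β x : V →ₗ[ℝ] V))) w ∈ W) ∧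
      br (br (x, β x) (y, β y)) (z, β z) =
        ((-R x y + ((β x : V →ₗ[ℝ] V) ∘ₗ (β y : V →ₗ[ℝ] V) -
            (β y : V →ₗ[ℝ] V) ∘ₗ (β x : V →ₗ[ℝ] V))) z,
         β ((-R x y + ((β x : V →ₗ[ℝ] V) ∘ₗ (β y : V →ₗ[ℝ] V) -
            (β y : V →ₗ[ℝ] V) ∘ₗ (β x : V →ₗ[ℝ] V))) z)) := by
  intro x hx y hy z hz
  have hWO : W ≤ O := hO ▸ le_sup_left
  have hNO : N ≤ O := hO ▸ le_sup_right
  have hbN : ∀ u ∈ W, ∀ v ∈ W, b u v ∈ N := by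
    intro u hu v hv
    rw [hN]
    exact Submodule.subset_span ⟨u, hu, v, hv, rfl⟩
  have hbbO : ∀ u ∈ W, ∀ v ∈ O, bb u v ∈ O := by
    intro u hu v hv
    rw [hO] at hv
    rcases Submodule.mem_sup.mp hv with ⟨w, hw, n, hn, rfl⟩
    rw [map_add, hbb_W u hu w hw]
    exact add_mem (hNO (hbN u hu w hw)) (hWO (hbb_N u hu n hn))
  -- antisymmetry of the bracket
  have hbr_anti : ∀ p q : V × H, br p q = - br q p := by
    intro p q
    have h := hbr_alt (p + q)
    simp only [map_add, LinearMap.add_apply, hbr_alt, add_zero, zero_add] at h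
    exact eq_neg_of_add_eq_zero_right h
  -- antisymmetry of R
  have hRanti : R y x = - R x y := by
    have h4 : ((br ((y : V), (0 : H)) ((x : V), (0 : H))).2 : V →ₗ[ℝ] V) =
        - ((br ((x : V), (0 : H)) ((y : V), (0 : H))).2 : V →ₗ[ℝ] V) := by
      rw [hbr_anti ((y : V), (0 : H)) ((x : V), (0 : H))]; rfl
    rw [hR x y, hR y x, neg_neg] at h4
    exact neg_eq_iff_eq_neg.mp h4
  -- the candidate map B
  set Bm : V →ₗ[ℝ] V := -R x y + ((β x : V →ₗ[ℝ] V) ∘ₗ (β y : V →ₗ[ℝ] V) -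
      (β y : V →ₗ[ℝ] V) ∘ₗ (β x : V →ₗ[ℝ] V)) with hBmdef
  have hBm_pt : ∀ v ∈ O, Bm v = -(R x y v) + (bb x (bb y v) - bb y (bb x v)) := by
    intro v hv
    rw [hBmdef]
    simp only [LinearMap.add_apply, LinearMap.sub_apply, LinearMap.neg_apply,
      LinearMap.comp_apply]
    rw [hβ y hy v hv, hβ x hx v hv, hβ x hx _ (hbbO y hy v hv), hβ y hy _ (hbbO x hx v hv)]
  have hBmO : ∀ v ∈ O, Bm v ∈ O := by
    intro v hv
    rw [hBm_pt v hv]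
    exact add_mem (neg_mem (hcurvO x hx y hy v hv))
      (sub_mem (hbbO x hx _ (hbbO y hy v hv)) (hbbO y hy _ (hbbO x hx v hv)))
  have hBmW : ∀ w ∈ W, Bm w ∈ W := by
    intro w hw
    rw [hBm_pt w (hWO hw), hbb_W y hy w hw, hbb_W x hx w hw]
    exact add_mem (neg_mem (hcurvW x hx y hy w hw))
      (sub_mem (hbb_N x hx _ (hbN y hy w hw)) (hbb_N y hy _ (hbN x hx w hw)))
  -- expanding the bracket
  have hsplit : ∀ (u : V) (C : H), ((u, C) : V × H) = (u, (0 : H)) + ((0 : V), C) := by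
    intro u C; simp
  have e1 : br (x, β x) (y, β y) =
      br ((x : V), (0 : H)) ((y : V), (0 : H)) + br ((x : V), (0 : H)) ((0 : V), β y) +
      br ((0 : V), β x) ((y : V), (0 : H)) + br ((0 : V), β x) ((0 : V), β y) := by
    rw [hsplit x (β x), hsplit y (β y)]
    simp only [map_add, LinearMap.add_apply]
    abel
  have e2 : br ((x : V), (0 : H)) ((0 : V), β y) = (-((β y : V →ₗ[ℝ] V) x), 0) := by
    rw [hbr_anti, hbr_hv]
    simp
  have e3 : br ((0 : V), β x) ((y : V), (0 : H)) = ((β x : V →ₗ[ℝ] V) y, 0) := hbr_hv _ _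
  have e4 := hbr_hh (β x) (β y)
  -- part (1), first component
  have hxy : (β x : V →ₗ[ℝ] V) y = (β y : V →ₗ[ℝ] V) x := by
    rw [hβ x hx y (hWO hy), hβ y hy x (hWO hx), hbb_W x hx y hy, hbb_W y hy x hx,
      hb_symm x hx y hy]
  have part1a : (br (x, β x) (y, β y)).1 = 0 := by
    rw [e1]
    simp only [Prod.fst_add, e2, e3, e4, hbr_vv, hxy]
    abel
  have part1b : ((br (x, β x) (y, β y)).2 : V →ₗ[ℝ] V) = Bm := by
    rw [e1]
    simp only [Prod.snd_add, e2, e3, e4, Submodule.coe_add, ZeroMemClass.coe_zero]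
    rw [hR x y, hBmdef]
    abel
  refine ⟨⟨part1a, part1b⟩, hBmW, ?_⟩
  -- part (3)
  have hBzW : Bm z ∈ W := hBmW z hz
  have hkey : ∀ v ∈ O, Bm (bb z v) - bb z (Bm v) = bb (Bm z) v := by
    intro v hv
    have hs := hsemi y hy x hx z hz v hv
    have harg : R y x z - (bb y (bb x z) - bb x (bb y z)) = Bm z := by
      rw [hRanti, hBm_pt z (hWO hz)]
      simp only [LinearMap.neg_apply]
      abel
    rw [harg] at hs
    rw [hs]
    simp only [LinearMap.sub_apply, LinearMap.comp_apply, hRanti, LinearMap.neg_apply]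
    rw [hBm_pt (bb z v) (hbbO z hz v hv), hBm_pt v hv]
    simp only [map_add, map_sub, map_neg]
    abel
  have hpair : br (x, β x) (y, β y) = ((0 : V), (br (x, β x) (y, β y)).2) :=
    Prod.ext part1a rfl
  set A : H := (br (x, β x) (y, β y)).2 with hAdef
  have e5 : br ((0 : V), A) (z, β z) =
      ((A : V →ₗ[ℝ] V) z,
        ⟨(A : V →ₗ[ℝ] V) ∘ₗ (β z : V →ₗ[ℝ] V) - (β z : V →ₗ[ℝ] V) ∘ₗ (A : V →ₗ[ℝ] V),
          hHlie _ A.2 _ (β z).2⟩) := by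
    rw [hsplit z (β z), map_add, hbr_hv, hbr_hh]
    simp
  have hcomm : (A : V →ₗ[ℝ] V) ∘ₗ (β z : V →ₗ[ℝ] V) -
      (β z : V →ₗ[ℝ] V) ∘ₗ (A : V →ₗ[ℝ] V) = (β (Bm z) : V →ₗ[ℝ] V) := by
    have hmem : ((A : V →ₗ[ℝ] V) ∘ₗ (β z : V →ₗ[ℝ] V) -
        (β z : V →ₗ[ℝ] V) ∘ₗ (A : V →ₗ[ℝ] V)) - (β (Bm z) : V →ₗ[ℝ] V) ∈ H :=
      sub_mem (hHlie _ A.2 _ (β z).2) (β (Bm z)).2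
    have h0 := huniq _ hmem ?_
    · exact sub_eq_zero.mp h0
    · intro v hv
      simp only [LinearMap.sub_apply, LinearMap.comp_apply]
      rw [part1b]
      rw [hβ z hz v hv]
      rw [hβ z hz _ (hBmO v hv)]
      rw [hβ (Bm z) hBzW v hv]
      rw [hkey v hv, sub_self]
  rw [hpair, e5]
  refine Prod.ext ?_ (Subtype.ext hcomm)
  show (A : V →ₗ[ℝ] V) z = Bm z
  rw [part1b]
end
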